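/- Let k ≥ 2t be positive integers, and let C be the binary linear [k+t, k] code with generator matrix G = [I_k | A], where the rows of the k×t matrix A consist of exactly 2 copies of each unit vector e_1, ..., e_t of F_2^t and k − 2t copies of the zero vector. Then M(C) = k + t. -/
import Mathlib


open Finset

/-- The support of a vector `x ∈ F_2^n`: the set of nonzero coordinates. -/
def supp {n : ℕ} (x : Fin n → ZMod 2) : Set (Fin n) := {i | x i ≠ 0}

/-- `c` is a minimal codeword of the linear code (subspace) `C ≤ F_2^n`:
it is a nonzero codeword and no nonzero codeword has support properly contained in `supp c`. -/
def IsMinimal {n : ℕ} (C : Submodule (ZMod 2) (Fin n → ZMod 2)) (c : Fin n → ZMod 2) : Prop :=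
  c ∈ C ∧ c ≠ 0 ∧ ∀ c' ∈ C, c' ≠ 0 → ¬ supp c' ⊂ supp c

/-- `M(C)`: the number of minimal codewords of `C`. -/
noncomputable def Mcode {n : ℕ} (C : Submodule (ZMod 2) (Fin n → ZMod 2)) : ℕ :=
  Set.ncard {c | IsMinimal C c}

/-- The `i`-th row `g^i` of the systematic generator matrix `G = [I_k | A]`. -/
def row {k t : ℕ} (A : Fin k → Fin t → ZMod 2) (i : Fin k) : Fin (k + t) → ZMod 2 :=
  Fin.append (Pi.single i 1) (A i)

/-- The binary linear `[k+t, k]` code with systematic generator matrix `G = [I_k | A]`. -/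
def genCode {k t : ℕ} (A : Fin k → Fin t → ZMod 2) :
    Submodule (ZMod 2) (Fin (k + t) → ZMod 2) :=
  Submodule.span (ZMod 2) (Set.range (row A))

/-- `c^S = ∑_{i ∈ S} g^i`. -/
def cS {k t : ℕ} (A : Fin k → Fin t → ZMod 2) (S : Finset (Fin k)) : Fin (k + t) → ZMod 2 :=
  ∑ i ∈ S, row A i

/-- `c_I`: the restriction of a codeword to its last `t` coordinates (the information bits). -/
def infoBits {k t : ℕ} (c : Fin (k + t) → ZMod 2) : Fin t → ZMod 2 :=
  fun j => c (Fin.natAdd k j)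

/-- `a_τ(A)` : the number of indices `i` with `g^i_I = A i = τ`. -/
def aCount {k t : ℕ} (A : Fin k → Fin t → ZMod 2) (τ : Fin t → ZMod 2) : ℕ :=
  (Finset.univ.filter fun i => A i = τ).card

/-- `M_2(n, k)`: the maximum of `M(C)` over all binary linear `[n, k]` codes `C`. -/
noncomputable def M2 (n k : ℕ) : ℕ :=
  sSup {m | ∃ C : Submodule (ZMod 2) (Fin n → ZMod 2),
    Module.finrank (ZMod 2) C = k ∧ Mcode C = m}


variable {k t : ℕ} (A : Fin k → Fin t → ZMod 2)

lemma cS_castAdd (S : Finset (Fin k)) (i' : Fin k) :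
    cS A S (Fin.castAdd t i') = if i' ∈ S then 1 else 0 := by
  simp only [cS, Finset.sum_apply, row, Fin.append_left]
  simp only [Pi.single_apply]
  simp only [eq_comm (a := i')]
  exact Finset.sum_ite_eq' S i' (fun _ => (1:ZMod 2))

lemma cS_natAdd (S : Finset (Fin k)) (j : Fin t) :
    cS A S (Fin.natAdd k j) = ∑ i ∈ S, A i j := by
  simp only [cS, Finset.sum_apply, row, Fin.append_right]

lemma cS_inj : Function.Injective (cS A) := by
  intro S S' h
  ext i
  have := congrArg (fun c => c (Fin.castAdd t i)) h
  simp only [cS_castAdd] at this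
  by_cases hi : i ∈ S <;> by_cases hi' : i ∈ S' <;> simp_all

lemma mem_genCode (c : Fin (k + t) → ZMod 2) :
    c ∈ genCode A ↔ ∃ S : Finset (Fin k), c = cS A S := by
  constructor
  · intro hc
    obtain ⟨f, hf⟩ := (Submodule.mem_span_range_iff_exists_fun (ZMod 2)).mp hc
    refine ⟨Finset.univ.filter (fun i => f i = 1), ?_⟩
    rw [← hf, cS, Finset.sum_filter]
    apply Finset.sum_congr rfl
    intro i _
    have h2 : ∀ x : ZMod 2, x = 0 ∨ x = 1 := by decide
    rcases h2 (f i) with h | h <;> simp [h]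
  · rintro ⟨S, rfl⟩
    exact Submodule.sum_mem _ fun i _ => Submodule.subset_span ⟨i, rfl⟩

def Pj {k t : ℕ} (A : Fin k → Fin t → ZMod 2) (j : Fin t) : Finset (Fin k) :=
  Finset.univ.filter (fun i => A i = Pi.single j 1)

lemma single_inj {j j' : Fin t} (h : (Pi.single j 1 : Fin t → ZMod 2) = Pi.single j' 1) :
    j = j' := by
  by_contra hne
  have := congrFun h j
  simp [Pi.single_apply, Ne.symm hne] at this

lemma single_ne_zero (j : Fin t) : (Pi.single j 1 : Fin t → ZMod 2) ≠ 0 := by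
  intro h
  have := congrFun h j
  simp [Pi.single_apply] at this

lemma Pj_disjoint {j j' : Fin t} (h : j ≠ j') : Disjoint (Pj A j) (Pj A j') := by
  rw [Finset.disjoint_left]
  intro i hi hi'
  simp only [Pj, Finset.mem_filter] at hi hi'
  exact h (single_inj (hi.2 ▸ hi'.2))

lemma cov (hunit : ∀ j : Fin t, (Finset.univ.filter fun i => A i = Pi.single j 1).card = 2)
    (hzero : (Finset.univ.filter fun i => A i = (0 : Fin t → ZMod 2)).card = k - 2 * t)
    (hk : 2 * t ≤ k) :
    ∀ i, A i = 0 ∨ ∃ j, A i = Pi.single j 1 := by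
  set F0 := Finset.univ.filter (fun i => A i = (0 : Fin t → ZMod 2)) with hF0
  set U := F0 ∪ Finset.univ.biUnion (fun j => Pj A j) with hU
  have hdisj : Disjoint F0 (Finset.univ.biUnion (fun j => Pj A j)) := by
    rw [Finset.disjoint_left]
    intro i hi hi'
    simp only [hF0, Finset.mem_filter] at hi
    simp only [Finset.mem_biUnion, Pj, Finset.mem_filter] at hi'
    obtain ⟨j, _, _, hj⟩ := hi'
    exact single_ne_zero j (by rw [← hj, hi.2])
  have hbc : (Finset.univ.biUnion (fun j => Pj A j)).card = 2 * t := by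
    rw [Finset.card_biUnion (fun j _ j' _ hne => Pj_disjoint A hne)]
    simp only [Pj, hunit]
    simp [mul_comm]
  have hcardU : U.card = k := by
    rw [hU, Finset.card_union_of_disjoint hdisj, hbc, hzero]
    omega
  have hUuniv : U = Finset.univ := Finset.eq_univ_of_card U (by simp [hcardU])
  intro i
  have hi : i ∈ U := hUuniv ▸ Finset.mem_univ i
  rw [hU, Finset.mem_union] at hi
  rcases hi with h | h
  · left; simpa [hF0] using (Finset.mem_filter.mp h).2
  · right
    obtain ⟨j, _, hj⟩ := Finset.mem_biUnion.mp h
    exact ⟨j, (Finset.mem_filter.mp hj).2⟩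

lemma A_apply (hA : ∀ i, A i = 0 ∨ ∃ j, A i = Pi.single j 1) (i : Fin k) (j : Fin t) :
    A i j = if i ∈ Pj A j then 1 else 0 := by
  have hmem : i ∈ Pj A j ↔ A i = Pi.single j 1 := by simp [Pj]
  rcases hA i with h | ⟨j', h⟩
  · rw [h]
    have : i ∉ Pj A j := fun hc => single_ne_zero j (by rw [← (hmem.mp hc), h])
    simp [this]
  · rw [h, Pi.single_apply]
    by_cases hjj : j = j'
    · subst hjj
      simp [hmem.mpr h]
    · have : i ∉ Pj A j := fun hc => hjj (single_inj (h ▸ hmem.mp hc)).symm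
      simp [hjj, this]

lemma cS_natAdd' (hA : ∀ i, A i = 0 ∨ ∃ j, A i = Pi.single j 1) (S : Finset (Fin k)) (j : Fin t) :
    cS A S (Fin.natAdd k j) = ((S ∩ Pj A j).card : ZMod 2) := by
  rw [cS_natAdd]
  rw [← Finset.filter_mem_eq_inter]
  rw [Finset.card_filter]
  push_cast
  refine Finset.sum_congr rfl fun i _ => ?_
  rw [A_apply A hA]

lemma mem_supp_castAdd (S : Finset (Fin k)) (i : Fin k) :
    Fin.castAdd t i ∈ supp (cS A S) ↔ i ∈ S := by
  simp only [supp, Set.mem_setOf_eq, cS_castAdd]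
  split <;> simp_all

lemma mem_supp_natAdd (hA : ∀ i, A i = 0 ∨ ∃ j, A i = Pi.single j 1)
    (S : Finset (Fin k)) (j : Fin t) :
    Fin.natAdd k j ∈ supp (cS A S) ↔ ¬ (2 ∣ (S ∩ Pj A j).card) := by
  simp only [supp, Set.mem_setOf_eq, cS_natAdd' A hA]
  exact not_iff_not.mpr (ZMod.natCast_eq_zero_iff _ 2)

lemma fin_add_cases (z : Fin (k + t)) :
    (∃ i, z = Fin.castAdd t i) ∨ ∃ j, z = Fin.natAdd k j :=
  Fin.addCases (fun i => Or.inl ⟨i, rfl⟩) (fun j => Or.inr ⟨j, rfl⟩) z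

lemma cS_eq_zero_iff (S : Finset (Fin k)) : cS A S = 0 ↔ S = ∅ := by
  constructor
  · intro h
    exact cS_inj A (h.trans (by simp [cS]))
  · rintro rfl; simp [cS]

lemma supp_subset_iff (hA : ∀ i, A i = 0 ∨ ∃ j, A i = Pi.single j 1) (S' S : Finset (Fin k)) :
    supp (cS A S') ⊆ supp (cS A S) ↔
      S' ⊆ S ∧ ∀ j, ¬ (2 ∣ (S' ∩ Pj A j).card) → ¬ (2 ∣ (S ∩ Pj A j).card) := by
  constructor
  · intro h
    refine ⟨fun i hi => (mem_supp_castAdd A S i).mp (h ((mem_supp_castAdd A S' i).mpr hi)),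
      fun j hj => (mem_supp_natAdd A hA S j).mp (h ((mem_supp_natAdd A hA S' j).mpr hj))⟩
  · rintro ⟨h1, h2⟩ z hz
    rcases fin_add_cases z with ⟨i, rfl⟩ | ⟨j, rfl⟩
    · exact (mem_supp_castAdd A S i).mpr (h1 ((mem_supp_castAdd A S' i).mp hz))
    · exact (mem_supp_natAdd A hA S j).mpr (h2 j ((mem_supp_natAdd A hA S' j).mp hz))

lemma supp_ssubset_iff (hA : ∀ i, A i = 0 ∨ ∃ j, A i = Pi.single j 1) (S' S : Finset (Fin k)) :
    supp (cS A S') ⊂ supp (cS A S) ↔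
      (S' ⊆ S ∧ ∀ j, ¬ (2 ∣ (S' ∩ Pj A j).card) → ¬ (2 ∣ (S ∩ Pj A j).card)) ∧ S' ≠ S := by
  constructor
  · intro h
    refine ⟨(supp_subset_iff A hA S' S).mp h.subset, ?_⟩
    rintro rfl
    exact h.ne rfl
  · rintro ⟨hsub, hne⟩
    have h1 := (supp_subset_iff A hA S' S).mpr hsub
    refine (Set.ssubset_iff_of_subset h1).mpr ?_
    obtain ⟨i, hiS, hiS'⟩ := Finset.exists_of_ssubset (hsub.1.ssubset_of_ne hne)
    exact ⟨Fin.castAdd t i, (mem_supp_castAdd A S i).mpr hiS,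
      fun hc => hiS' ((mem_supp_castAdd A S' i).mp hc)⟩

abbrev HA {k t : ℕ} (A : Fin k → Fin t → ZMod 2) : Prop :=
  ∀ i, A i = 0 ∨ ∃ j, A i = Pi.single j 1
abbrev HU {k t : ℕ} (A : Fin k → Fin t → ZMod 2) : Prop :=
  ∀ j : Fin t, (Finset.univ.filter fun i => A i = Pi.single j 1).card = 2

lemma card_Pj (hunit : HU A) (j : Fin t) : (Pj A j).card = 2 := hunit j

lemma mem_Pj_iff (i : Fin k) (j : Fin t) : i ∈ Pj A j ↔ A i = Pi.single j 1 := by simp [Pj]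

lemma Pj_nonempty (hunit : HU A) (j : Fin t) : (Pj A j).Nonempty :=
  Finset.card_pos.mp (by rw [card_Pj A hunit]; norm_num)

lemma minimal_singleton (hA : HA A) (i : Fin k) : IsMinimal (genCode A) (cS A {i}) := by
  refine ⟨(mem_genCode A _).mpr ⟨{i}, rfl⟩, by simp [cS_eq_zero_iff], ?_⟩
  intro c' hc' hne hss
  obtain ⟨S', rfl⟩ := (mem_genCode A _).mp hc'
  have hS'ne : S' ≠ ∅ := fun h => hne ((cS_eq_zero_iff A S').mpr h)
  rw [supp_ssubset_iff A hA] at hss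
  obtain ⟨⟨hsub, -⟩, hne'⟩ := hss
  rcases Finset.subset_singleton_iff.mp hsub with h | h
  · exact hS'ne h
  · exact hne' h

lemma minimal_pair (hA : HA A) (hunit : HU A) (j : Fin t) : IsMinimal (genCode A) (cS A (Pj A j)) := by
  refine ⟨(mem_genCode A _).mpr ⟨_, rfl⟩, ?_, ?_⟩
  · rw [Ne, cS_eq_zero_iff]
    exact (Pj_nonempty A hunit j).ne_empty
  · intro c' hc' hne hss
    obtain ⟨S', rfl⟩ := (mem_genCode A _).mp hc'
    have hS'ne : S'.Nonempty :=
      Finset.nonempty_iff_ne_empty.mpr (fun h => hne ((cS_eq_zero_iff A S').mpr h))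
    rw [supp_ssubset_iff A hA] at hss
    obtain ⟨⟨hsub, hinfo⟩, hne'⟩ := hss
    have hcard : S'.card = 1 := by
      have h1 : 1 ≤ S'.card := Finset.card_pos.mpr hS'ne
      have h2 : S'.card ≤ 2 := (card_Pj A hunit j) ▸ Finset.card_le_card hsub
      rcases Nat.lt_or_ge S'.card 2 with h | h
      · omega
      · exact absurd (Finset.eq_of_subset_of_card_le hsub (by rw [card_Pj A hunit]; omega)) hne'
    have := hinfo j (by rw [Finset.inter_eq_left.mpr hsub, hcard]; omega)
    rw [Finset.inter_self, card_Pj A hunit] at this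
    omega

lemma minimal_is (hA : HA A) (hunit : HU A) (c : Fin (k + t) → ZMod 2) (hc : IsMinimal (genCode A) c) :
    (∃ i, c = cS A {i}) ∨ ∃ j, c = cS A (Pj A j) := by
  obtain ⟨S, rfl⟩ := (mem_genCode A _).mp hc.1
  have hSne : S.Nonempty :=
    Finset.nonempty_iff_ne_empty.mpr (fun h => hc.2.1 ((cS_eq_zero_iff A S).mpr h))
  by_contra hnot
  push_neg at hnot
  obtain ⟨hnot1, hnot2⟩ := hnot
  have hSne1 : ∀ i, S ≠ {i} := fun i h => hnot1 i (by rw [h])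
  have hSnePj : ∀ j, S ≠ Pj A j := fun j h => hnot2 j (by rw [h])
  have hcard2 : 2 ≤ S.card := by
    rcases Nat.lt_or_ge S.card 2 with h | h
    · interval_cases h' : S.card
      · exact absurd (Finset.card_eq_zero.mp h') hSne.ne_empty
      · obtain ⟨i, hi⟩ := Finset.card_eq_one.mp h'
        exact absurd hi (hSne1 i)
    · exact h
  have hmin := hc.2.2
  by_cases hz : ∃ i ∈ S, A i = 0
  · obtain ⟨i, hiS, hAi⟩ := hz
    refine hmin (cS A {i}) ((mem_genCode A _).mpr ⟨_, rfl⟩) (by simp [cS_eq_zero_iff]) ?_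
    rw [supp_ssubset_iff A hA]
    refine ⟨⟨Finset.singleton_subset_iff.mpr hiS, fun j hj => ?_⟩, ?_⟩
    · exfalso
      have : i ∉ Pj A j := fun h => single_ne_zero j (by rw [← (mem_Pj_iff A i j).mp h, hAi])
      simp [Finset.singleton_inter_of_notMem this] at hj
    · intro h; exact hSne1 i h.symm
  · by_cases hp : ∃ j, Pj A j ⊆ S
    · obtain ⟨j, hPjS⟩ := hp
      refine hmin (cS A (Pj A j)) ((mem_genCode A _).mpr ⟨_, rfl⟩) ?_ ?_
      · rw [Ne, cS_eq_zero_iff]; exact (Pj_nonempty A hunit j).ne_empty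
      · rw [supp_ssubset_iff A hA]
        refine ⟨⟨hPjS, fun j' hj' => ?_⟩, fun h => hSnePj j h.symm⟩
        exfalso
        by_cases hjj : j = j'
        · subst hjj
          rw [Finset.inter_self, card_Pj A hunit] at hj'
          omega
        · rw [Finset.disjoint_iff_inter_eq_empty.mp (Pj_disjoint A hjj)] at hj'
          simp at hj'
    · push_neg at hz hp
      obtain ⟨i, hiS⟩ := hSne
      obtain ⟨j, hAi⟩ := (hA i).resolve_left (hz i hiS)
      have hiPj : i ∈ Pj A j := (mem_Pj_iff A i j).mpr hAi
      obtain ⟨i2, hi2Pj, hi2S⟩ := Finset.not_subset.mp (hp j)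
      have hii2 : i ≠ i2 := fun h => hi2S (h ▸ hiS)
      have hPjeq : Pj A j = {i, i2} := by
        refine (Finset.eq_of_subset_of_card_le ?_ ?_).symm
        · intro x hx
          rcases Finset.mem_insert.mp hx with rfl | hx
          · exact hiPj
          · rwa [Finset.mem_singleton.mp hx]
        · rw [card_Pj A hunit, Finset.card_insert_of_notMem (by simp [hii2]),
            Finset.card_singleton]
      have hinter : S ∩ Pj A j = {i} := by
        rw [hPjeq]
        ext x
        simp only [Finset.mem_inter, Finset.mem_insert, Finset.mem_singleton]
        constructor
        · rintro ⟨hxS, rfl | rfl⟩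
          · rfl
          · exact absurd hxS hi2S
        · rintro rfl; exact ⟨hiS, Or.inl rfl⟩
      refine hmin (cS A {i}) ((mem_genCode A _).mpr ⟨_, rfl⟩) (by simp [cS_eq_zero_iff]) ?_
      rw [supp_ssubset_iff A hA]
      refine ⟨⟨Finset.singleton_subset_iff.mpr hiS, fun j' hj' => ?_⟩, fun h => hSne1 i h.symm⟩
      by_cases hjj : j = j'
      · subst hjj
        rw [hinter, Finset.card_singleton]
        omega
      · exfalso
        have : i ∉ Pj A j' := Finset.disjoint_left.mp (Pj_disjoint A hjj) hiPj
        simp [Finset.singleton_inter_of_notMem this] at hj'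


lemma Pj_injective (hunit : HU A) : Function.Injective (Pj A) := by
  intro j j' h
  obtain ⟨i, hi⟩ := Pj_nonempty A hunit j
  have hi' : i ∈ Pj A j' := h ▸ hi
  exact single_inj (((mem_Pj_iff A i j).mp hi).symm.trans ((mem_Pj_iff A i j').mp hi'))

theorem stmt19 (k t : ℕ) (hkpos : 0 < k) (htpos : 0 < t) (hk : 2 * t ≤ k)
    (A : Fin k → Fin t → ZMod 2)
    (hunit : ∀ j : Fin t, aCount A (Pi.single j 1) = 2)
    (hzero : aCount A 0 = k - 2 * t) :
    Mcode (genCode A) = k + t := by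
  classical
  have hunit' : HU A := hunit
  have hA : HA A := cov A hunit' hzero hk
  set T : Finset (Finset (Fin k)) :=
    (Finset.univ.image fun i => ({i} : Finset (Fin k))) ∪ Finset.univ.image (Pj A) with hT
  have hset : {c | IsMinimal (genCode A) c} = (cS A) '' ↑T := by
    ext c
    simp only [Set.mem_setOf_eq, Set.mem_image, Finset.mem_coe, hT, Finset.mem_union,
      Finset.mem_image, Finset.mem_univ, true_and]
    constructor
    · intro hc
      rcases minimal_is A hA hunit' c hc with ⟨i, rfl⟩ | ⟨j, rfl⟩
      · exact ⟨{i}, Or.inl ⟨i, rfl⟩, rfl⟩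
      · exact ⟨Pj A j, Or.inr ⟨j, rfl⟩, rfl⟩
    · rintro ⟨S, hS | hS, rfl⟩
      · obtain ⟨i, rfl⟩ := hS
        exact minimal_singleton A hA i
      · obtain ⟨j, rfl⟩ := hS
        exact minimal_pair A hA hunit' j
  rw [Mcode, hset, Set.ncard_image_of_injective _ (cS_inj A), Set.ncard_coe_finset]
  have hdisj : Disjoint (Finset.univ.image fun i => ({i} : Finset (Fin k)))
      (Finset.univ.image (Pj A)) := by
    rw [Finset.disjoint_left]
    rintro s hs hs'
    obtain ⟨i, -, rfl⟩ := Finset.mem_image.mp hs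
    obtain ⟨j, -, hj⟩ := Finset.mem_image.mp hs'
    have h2 := card_Pj A hunit' j
    rw [hj, Finset.card_singleton] at h2
    omega
  rw [hT, Finset.card_union_of_disjoint hdisj,
    Finset.card_image_of_injective _ Finset.singleton_injective,
    Finset.card_image_of_injective _ (Pj_injective A hunit'),
    Finset.card_univ, Finset.card_univ, Fintype.card_fin, Fintype.card_fin]
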